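/- arXiv:1709.00853 — 2 statements merged into one kernel-verified Lean document; each statement's English description precedes it below -/
import Mathlib

section
/- Let A(p) = A⁰ + Σ_{k=1}^K p_k·Aᵏ be a symmetric parametric interval matrix with affine-linear dependencies over the parameter box ∏_k [p̌_k − Δ_k, p̌_k + Δ_k], and let B = Σ_{k=1}^K Δ_k·|Aᵏ|. If the midpoint matrix A(p̌) is stable and ρ(|A(p̌)⁻¹|·B) < 1, then A(p) is stable for every p in the parameter box. -/
/-!
Write `A(p) = A(p̌) + D` with `D = ∑ (pₖ - p̌ₖ) Aᵏ`, so that `|D| ≤ B` entrywise, and follow the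
segment `A(p̌) + t D`, `t ∈ [0, 1]`. If some `A(p̌) + t D` were singular, a kernel vector `x`
would satisfy `|x| ≤ |A(p̌)⁻¹| B |x|`, and a Perron–Frobenius type bound coming from Gelfand's
formula would force `ρ(|A(p̌)⁻¹| B) ≥ 1`. Hence the whole segment is nonsingular. Its largest
eigenvalue, the supremum of the Rayleigh quotient, is a continuous function of `t` that never
vanishes, so it stays negative from `t = 0` to `t = 1`.
-/

open Matrix

/-- Entrywise absolute value of a real matrix. -/
def mAbs {n : ℕ} (M : Matrix (Fin n) (Fin n) ℝ) : Matrix (Fin n) (Fin n) ℝ :=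
  Matrix.of fun i j => |M i j|

/-- Spectral radius of a real matrix: the largest modulus of a (complex) eigenvalue. -/
noncomputable def specRad {n : ℕ} (M : Matrix (Fin n) (Fin n) ℝ) : ℝ :=
  sSup {r : ℝ | ∃ μ : ℂ, μ ∈ spectrum ℂ (M.map Complex.ofReal) ∧ r = ‖μ‖}

namespace ContinuousLinearMap

variable {𝕜 E : Type*} [RCLike 𝕜] [NormedAddCommGroup E] [InnerProductSpace 𝕜 E]

lemma bddAbove_range_rayleighQuotient (T : E →L[𝕜] E) : BddAbove (Set.range T.rayleighQuotient) :=
  ⟨‖T‖, Set.forall_mem_range.2 fun x ↦ (le_abs_self _).trans (T.rayleighQuotient_le_norm x)⟩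

lemma rayleighQuotient_le_iSup (T : E →L[𝕜] E) (x : {x : E // x ≠ 0}) :
    T.rayleighQuotient x ≤ ⨆ y : {y : E // y ≠ 0}, T.rayleighQuotient y :=
  le_ciSup (T.bddAbove_range_rayleighQuotient.mono (Set.range_comp_subset_range _ _)) x

lemma lipschitzWith_one_iSup_rayleighQuotient :
    LipschitzWith 1 fun T : E →L[𝕜] E ↦ ⨆ x : {x : E // x ≠ 0}, T.rayleighQuotient x := by
  refine LipschitzWith.of_le_add_mul 1 fun T S ↦ ?_
  rcases isEmpty_or_nonempty {x : E // x ≠ 0} with _ | _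
  · simp
  refine ciSup_le fun x ↦ ?_
  calc T.rayleighQuotient x = S.rayleighQuotient x + (T - S).rayleighQuotient x := by
        rw [← rayleighQuotient_add, add_sub_cancel]
    _ ≤ (⨆ y : {y : E // y ≠ 0}, S.rayleighQuotient y) + 1 * dist T S := by
        rw [one_mul, dist_eq_norm]
        exact add_le_add (S.rayleighQuotient_le_iSup x)
          ((le_abs_self _).trans ((T - S).rayleighQuotient_le_norm x))

end ContinuousLinearMap

section FiniteDimensional

variable {E : Type*} [NormedAddCommGroup E] [InnerProductSpace ℝ E] [FiniteDimensional ℝ E]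

lemma ContinuousLinearMap.le_iSup_rayleighQuotient_of_mem_spectrum {T : E →L[ℝ] E} {μ : ℝ}
    (hμ : μ ∈ spectrum ℝ T) : μ ≤ ⨆ x : {x : E // x ≠ 0}, T.rayleighQuotient x := by
  rw [spectrum_eq, ← Module.End.hasEigenvalue_iff_mem_spectrum] at hμ
  obtain ⟨x, hx⟩ := hμ.exists_hasEigenvector
  have hx0 : x ≠ 0 := hx.2
  have hTx : T x = μ • x := hx.apply_eq_smul
  calc μ = T.rayleighQuotient x := by
        rw [rayleighQuotient, reApplyInnerSelf_apply, hTx, real_inner_smul_left,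
          real_inner_self_eq_norm_sq, RCLike.re_to_real]
        field_simp [norm_ne_zero_iff.2 hx0]
    _ ≤ _ := T.rayleighQuotient_le_iSup ⟨x, hx0⟩

lemma IsSelfAdjoint.iSup_rayleighQuotient_mem_spectrum [Nontrivial E] {T : E →L[ℝ] E}
    (hT : IsSelfAdjoint T) : (⨆ x : {x : E // x ≠ 0}, T.rayleighQuotient x) ∈ spectrum ℝ T := by
  rw [ContinuousLinearMap.spectrum_eq, ← Module.End.hasEigenvalue_iff_mem_spectrum]
  exact (ContinuousLinearMap.isSelfAdjoint_iff_isSymmetric.1 hT)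
    |>.hasEigenvalue_iSup_of_finiteDimensional

lemma IsSelfAdjoint.spectrum_add_neg_of_isUnit_segment {T S : E →L[ℝ] E} (hT : IsSelfAdjoint T)
    (hS : IsSelfAdjoint S) (hneg : ∀ μ ∈ spectrum ℝ T, μ < 0)
    (hunit : ∀ t ∈ Set.Icc (0 : ℝ) 1, IsUnit (T + t • S)) :
    ∀ μ ∈ spectrum ℝ (T + S), μ < 0 := by
  rcases subsingleton_or_nontrivial E with _ | _
  · simp [spectrum.of_subsingleton]
  set g : ℝ → ℝ := fun t ↦ ⨆ x : {x : E // x ≠ 0}, (T + t • S).rayleighQuotient x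
  have hg_mem : ∀ t, g t ∈ spectrum ℝ (T + t • S) := fun t ↦
    (hT.add ((IsSelfAdjoint.all t).smul hS)).iSup_rayleighQuotient_mem_spectrum
  have hg_cont : Continuous g :=
    ContinuousLinearMap.lipschitzWith_one_iSup_rayleighQuotient.continuous.comp (by fun_prop)
  have hg0 : g 0 < 0 := hneg _ (by simpa using hg_mem 0)
  have hg1 : g 1 < 0 := by
    by_contra! h
    obtain ⟨t, ht, hgt⟩ := intermediate_value_Icc zero_le_one hg_cont.continuousOn ⟨hg0.le, h⟩
    exact spectrum.zero_notMem ℝ (hunit t ht) (hgt ▸ hg_mem t)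
  rw [show g 1 = ⨆ x : {x : E // x ≠ 0}, (T + S).rayleighQuotient x by simp [g]] at hg1
  exact fun μ hμ ↦ (ContinuousLinearMap.le_iSup_rayleighQuotient_of_mem_spectrum hμ).trans_lt hg1

end FiniteDimensional

namespace Matrix

lemma isSymm_sum {ι κ : Type*} {s : Finset κ} {A : κ → Matrix ι ι ℝ}
    (hA : ∀ k ∈ s, (A k).IsSymm) : (∑ k ∈ s, A k).IsSymm := by
  rw [IsSymm, transpose_sum]
  exact Finset.sum_congr rfl fun k hk ↦ hA k hk

variable {ι : Type*} [Fintype ι]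

lemma spectrum_toEuclideanCLM [DecidableEq ι] (M : Matrix ι ι ℝ) :
    spectrum ℝ (toEuclideanCLM (𝕜 := ℝ) M) = spectrum ℝ M :=
  AlgEquiv.spectrum_eq (toEuclideanCLM (n := ι) (𝕜 := ℝ)).toAlgEquiv M

lemma IsSymm.spectrum_add_neg_of_isUnit_segment [DecidableEq ι] {M D : Matrix ι ι ℝ} (hM : M.IsSymm)
    (hD : D.IsSymm) (hneg : ∀ μ ∈ spectrum ℝ M, μ < 0)
    (hunit : ∀ t ∈ Set.Icc (0 : ℝ) 1, IsUnit (M + t • D)) :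
    ∀ μ ∈ spectrum ℝ (M + D), μ < 0 := by
  let Φ := toEuclideanCLM (n := ι) (𝕜 := ℝ)
  have hsa : ∀ {N : Matrix ι ι ℝ}, N.IsSymm → IsSelfAdjoint (Φ N) := fun hN ↦
    (isHermitian_iff_isSymm.2 hN).isSelfAdjoint.map Φ
  have h := IsSelfAdjoint.spectrum_add_neg_of_isUnit_segment (hsa hM) (hsa hD)
    (by rwa [spectrum_toEuclideanCLM]) fun t ht ↦ by
      simpa only [map_add, map_smul] using (hunit t ht).map Φ
  rwa [← map_add, spectrum_toEuclideanCLM] at h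

lemma mulVec_mono_of_nonneg {κ : Type*} {E : Matrix κ ι ℝ} (hE : ∀ i j, 0 ≤ E i j) {v w : ι → ℝ}
    (h : v ≤ w) : E *ᵥ v ≤ E *ᵥ w :=
  fun i ↦ Finset.sum_le_sum fun j _ ↦ mul_le_mul_of_nonneg_left (h j) (hE i j)

lemma mulVec_le_mulVec_of_le {κ : Type*} {E F : Matrix κ ι ℝ} (h : ∀ i j, E i j ≤ F i j) {v : ι → ℝ}
    (hv : 0 ≤ v) : E *ᵥ v ≤ F *ᵥ v :=
  fun i ↦ Finset.sum_le_sum fun j _ ↦ mul_le_mul_of_nonneg_right (h i j) (hv j)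

lemma le_pow_mulVec_of_le_mulVec [DecidableEq ι] {E : Matrix ι ι ℝ} (hE : ∀ i j, 0 ≤ E i j)
    {v : ι → ℝ} (hv : v ≤ E *ᵥ v) (m : ℕ) : v ≤ (E ^ m) *ᵥ v := by
  induction m with
  | zero => simp
  | succ m ih =>
    rw [pow_succ', ← mulVec_mulVec]
    exact hv.trans (mulVec_mono_of_nonneg hE ih)

section LinftyOpNorm

attribute [local instance] Matrix.linftyOpNormedAddCommGroup Matrix.linftyOpNormedRing
  Matrix.linftyOpNormedAlgebra

lemma linfty_opNNNorm_map_ofReal (M : Matrix ι ι ℝ) : ‖M.map Complex.ofReal‖₊ = ‖M‖₊ := by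
  simp [linfty_opNNNorm_def]

/-- A nonnegative `v ≠ 0` with `v ≤ E v` keeps `‖E ^ m‖ ≥ 1` for all `m`, so Gelfand's formula
gives `ρ(E) ≥ 1`. -/
lemma one_le_spectralRadius_of_le_mulVec [DecidableEq ι] {E : Matrix ι ι ℝ}
    (hE : ∀ i j, 0 ≤ E i j) {v : ι → ℝ} (hv : 0 ≤ v) (hv0 : v ≠ 0) (hle : v ≤ E *ᵥ v) :
    1 ≤ spectralRadius ℂ (E.map Complex.ofReal) := by
  have hnorm : ∀ m : ℕ, 1 ≤ ‖E ^ m‖₊ := fun m ↦ by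
    have hvE : ‖v‖ ≤ ‖(E ^ m) *ᵥ v‖ := (pi_norm_le_iff_of_nonneg (norm_nonneg _)).2 fun i ↦
      calc ‖v i‖ = v i := Real.norm_of_nonneg (hv i)
        _ ≤ ((E ^ m) *ᵥ v) i := le_pow_mulVec_of_le_mulVec hE hle m i
        _ ≤ ‖(E ^ m) *ᵥ v‖ := (Real.le_norm_self _).trans (norm_le_pi_norm _ i)
    have hpos : 0 < ‖v‖ := norm_pos_iff.2 hv0
    rw [← NNReal.coe_le_coe, NNReal.coe_one, coe_nnnorm]
    nlinarith [linfty_opNorm_mulVec (E ^ m) v]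
  refine ge_of_tendsto (spectrum.pow_nnnorm_pow_one_div_tendsto_nhds_spectralRadius _)
    (Filter.Eventually.of_forall fun m ↦ ?_)
  have hpow : E.map Complex.ofReal ^ m = (E ^ m).map Complex.ofReal :=
    (E.map_pow Complex.ofRealHom m).symm
  rw [hpow, linfty_opNNNorm_map_ofReal]
  rcases m.eq_zero_or_pos with rfl | hm
  · simp
  exact ENNReal.one_le_rpow (by exact_mod_cast hnorm m) (by positivity)

end LinftyOpNorm

end Matrix

section SpecRad

variable {n : ℕ}

lemma mAbs_nonneg (M : Matrix (Fin n) (Fin n) ℝ) (i j : Fin n) : 0 ≤ mAbs M i j :=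
  abs_nonneg (M i j)

lemma abs_mulVec_le_mAbs_mulVec (M : Matrix (Fin n) (Fin n) ℝ) (x : Fin n → ℝ) :
    |M *ᵥ x| ≤ mAbs M *ᵥ |x| := fun i ↦ by
  simpa [mulVec, dotProduct, mAbs, abs_mul] using Finset.abs_sum_le_sum_abs (fun j ↦ M i j * x j) _

lemma spectralRadius_le_ofReal_specRad (M : Matrix (Fin n) (Fin n) ℝ) :
    spectralRadius ℂ (M.map Complex.ofReal) ≤ ENNReal.ofReal (specRad M) := by
  have hbdd : BddAbove {r : ℝ | ∃ μ : ℂ, μ ∈ spectrum ℂ (M.map Complex.ofReal) ∧ r = ‖μ‖} := by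
    obtain ⟨C, hC⟩ := ((M.map Complex.ofReal).finite_spectrum.image (‖·‖)).bddAbove
    refine ⟨C, ?_⟩
    rintro r ⟨ν, hν, rfl⟩
    exact hC ⟨ν, hν, rfl⟩
  refine iSup₂_le fun μ hμ ↦ ?_
  rw [← ENNReal.ofReal_coe_nnreal, coe_nnnorm]
  exact ENNReal.ofReal_le_ofReal (le_csSup hbdd ⟨μ, hμ, rfl⟩)

lemma one_le_specRad_of_le_mulVec {E : Matrix (Fin n) (Fin n) ℝ} (hE : ∀ i j, 0 ≤ E i j)
    {v : Fin n → ℝ} (hv : 0 ≤ v) (hv0 : v ≠ 0) (hle : v ≤ E *ᵥ v) : 1 ≤ specRad E :=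
  ENNReal.one_le_ofReal.1 <| (one_le_spectralRadius_of_le_mulVec hE hv hv0 hle).trans
    (spectralRadius_le_ofReal_specRad E)

/-- A kernel vector `x` of `M + D` satisfies `x = -M⁻¹ D x`, hence `|x| ≤ |M⁻¹| B |x|`. -/
lemma isUnit_add_of_specRad_lt_one {M D B : Matrix (Fin n) (Fin n) ℝ} (hM : IsUnit M)
    (hDB : ∀ i j, |D i j| ≤ B i j) (hρ : specRad (mAbs M⁻¹ * B) < 1) : IsUnit (M + D) := by
  by_contra hMD
  rw [isUnit_iff_isUnit_det, isUnit_iff_ne_zero, not_not] at hMD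
  obtain ⟨x, hx0, hx⟩ := exists_mulVec_eq_zero_iff.2 hMD
  have hx_eq : x = -(M⁻¹ *ᵥ (D *ᵥ x)) := by
    rw [add_mulVec, add_eq_zero_iff_eq_neg] at hx
    rw [← mulVec_neg, ← hx, mulVec_mulVec,
      nonsing_inv_mul M ((isUnit_iff_isUnit_det M).1 hM), one_mulVec]
  have hle : |x| ≤ (mAbs M⁻¹ * B) *ᵥ |x| :=
    calc |x| = |M⁻¹ *ᵥ (D *ᵥ x)| := by rw [hx_eq, abs_neg, ← hx_eq]
      _ ≤ mAbs M⁻¹ *ᵥ |D *ᵥ x| := abs_mulVec_le_mAbs_mulVec _ _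
      _ ≤ mAbs M⁻¹ *ᵥ (mAbs D *ᵥ |x|) :=
        mulVec_mono_of_nonneg (mAbs_nonneg _) (abs_mulVec_le_mAbs_mulVec _ _)
      _ ≤ mAbs M⁻¹ *ᵥ (B *ᵥ |x|) :=
        mulVec_mono_of_nonneg (mAbs_nonneg _) (mulVec_le_mulVec_of_le hDB (abs_nonneg x))
      _ = (mAbs M⁻¹ * B) *ᵥ |x| := mulVec_mulVec _ _ _
  have hE : ∀ i j, 0 ≤ (mAbs M⁻¹ * B) i j := fun i j ↦ by
    rw [mul_apply]
    exact Finset.sum_nonneg fun l _ ↦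
      mul_nonneg (mAbs_nonneg _ i l) ((abs_nonneg _).trans (hDB l j))
  have habs_ne : |x| ≠ 0 := fun h ↦ hx0 <| funext fun i ↦ by
    simpa using congrFun h i
  exact hρ.not_ge (one_le_specRad_of_le_mulVec hE (abs_nonneg x) habs_ne hle)

lemma abs_sum_smul_apply_le {K : ℕ} {c Δ : Fin K → ℝ} (h : ∀ k, |c k| ≤ Δ k)
    (A : Fin K → Matrix (Fin n) (Fin n) ℝ) (i j : Fin n) :
    |(∑ k, c k • A k) i j| ≤ (∑ k, Δ k • mAbs (A k)) i j := by
  simp only [Matrix.sum_apply, Matrix.smul_apply, smul_eq_mul, mAbs, of_apply]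
  refine (Finset.abs_sum_le_sum_abs _ _).trans (Finset.sum_le_sum fun k _ ↦ ?_)
  rw [abs_mul]
  exact mul_le_mul_of_nonneg_right (h k) (abs_nonneg _)

end SpecRad

theorem stmt_5_general {n K : ℕ}
    (A0 : Matrix (Fin n) (Fin n) ℝ) (A : Fin K → Matrix (Fin n) (Fin n) ℝ)
    (hA0 : A0.IsSymm) (hA : ∀ k, (A k).IsSymm)
    (pc Δ : Fin K → ℝ)
    (Amid : Matrix (Fin n) (Fin n) ℝ) (hAmid : Amid = A0 + ∑ k, pc k • A k)
    (B : Matrix (Fin n) (Fin n) ℝ) (hB : B = ∑ k, Δ k • mAbs (A k))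
    (hmid : ∀ μ ∈ spectrum ℝ Amid, μ < 0)
    (hρ : specRad (mAbs Amid⁻¹ * B) < 1) :
    ∀ p : Fin K → ℝ, (∀ k, pc k - Δ k ≤ p k ∧ p k ≤ pc k + Δ k) →
      ∀ μ ∈ spectrum ℝ (A0 + ∑ k, p k • A k), μ < 0 := by
  intro p hp
  set D := ∑ k, (p k - pc k) • A k
  have hAp : A0 + ∑ k, p k • A k = Amid + D := by
    simp only [hAmid, D, sub_smul, Finset.sum_sub_distrib]
    abel
  have hDB : ∀ i j, |D i j| ≤ B i j := hB ▸ abs_sum_smul_apply_le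
    (fun k ↦ abs_sub_le_iff.2 ⟨by linarith [hp k], by linarith [hp k]⟩) A
  have hsymm : ∀ c : Fin K → ℝ, (∑ k, c k • A k).IsSymm := fun c ↦
    isSymm_sum fun k _ ↦ (hA k).smul (c k)
  have hAmid_unit : IsUnit Amid := spectrum.isUnit_of_zero_notMem ℝ fun h ↦ (hmid 0 h).false
  rw [hAp]
  refine (hAmid ▸ hA0.add (hsymm pc)).spectrum_add_neg_of_isUnit_segment (hsymm _) hmid fun t ht ↦
    isUnit_add_of_specRad_lt_one hAmid_unit (fun i j ↦ ?_) hρ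
  calc |(t • D) i j| = |t| * |D i j| := by rw [Matrix.smul_apply, smul_eq_mul, abs_mul]
    _ ≤ 1 * B i j := mul_le_mul (abs_le.2 ⟨by linarith [ht.1], ht.2⟩) (hDB i j)
        (abs_nonneg _) zero_le_one
    _ = B i j := one_mul _

/-- If the midpoint matrix `A(p̌)` of a symmetric parametric interval matrix is stable
(all eigenvalues strictly negative) and `ρ(|A(p̌)⁻¹|·B) < 1` with `B = ∑ Δₖ·|Aᵏ|`, then
`A(p)` is stable for every `p` in the parameter box. -/
theorem stmt_5 {n K : ℕ}
    (A0 : Matrix (Fin n) (Fin n) ℝ) (A : Fin K → Matrix (Fin n) (Fin n) ℝ)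
    (hA0 : A0.IsSymm) (hA : ∀ k, (A k).IsSymm)
    (pc Δ : Fin K → ℝ) (hΔ : ∀ k, 0 ≤ Δ k)
    (Amid : Matrix (Fin n) (Fin n) ℝ) (hAmid : Amid = A0 + ∑ k, pc k • A k)
    (B : Matrix (Fin n) (Fin n) ℝ) (hB : B = ∑ k, Δ k • mAbs (A k))
    (hmid : ∀ μ ∈ spectrum ℝ Amid, μ < 0)
    (hρ : specRad (mAbs Amid⁻¹ * B) < 1) :
    ∀ p : Fin K → ℝ, (∀ k, pc k - Δ k ≤ p k ∧ p k ≤ pc k + Δ k) →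
      ∀ μ ∈ spectrum ℝ (A0 + ∑ k, p k • A k), μ < 0 :=
  stmt_5_general A0 A hA0 hA pc Δ Amid hAmid B hB hmid hρ
end

section
/- Let A(p) = A⁰ + Σ_{k=1}^K p_k·Aᵏ be a symmetric parametric interval matrix with affine-linear dependencies over the parameter box ∏_k [p̲_k, p̄_k]. Then A(p) is Schur stable for every p in the parameter box if and only if A(p) is Schur stable for every vertex p of the box, i.e., for every p with p_k ∈ {p̲_k, p̄_k} for all k. -/
/-!
For a real symmetric matrix `M`, all eigenvalues lie in `(-1, 1)` exactly when
`|xᵀ M x| < xᵀ x` for every `x ≠ 0` (`1 ∓ M` are positive definite). For fixed `x` the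
quadratic form `xᵀ A(p) x` is affine in `p`, so on the parameter box it is maximised and
minimised at vertices; the strict bound at those two vertices gives it at every `p`.
-/

open Matrix

namespace Matrix

section

variable {m : Type*} [Fintype m] [DecidableEq m] {M : Matrix m m ℝ}

lemma IsHermitian.posDef_algebraMap_sub (hM : M.IsHermitian) {c : ℝ}
    (h : ∀ μ ∈ spectrum ℝ M, μ < c) : (algebraMap ℝ (Matrix m m ℝ) c - M).PosDef := by
  have hcM : (algebraMap ℝ (Matrix m m ℝ) c - M).IsHermitian :=
    (IsSelfAdjoint.algebraMap _ (.all c)).sub hM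
  refine hcM.posDef_iff_eigenvalues_pos.mpr fun i => ?_
  obtain ⟨c', rfl, μ, hμ, hc'μ⟩ :=
    (spectrum.singleton_sub_eq M c ▸ hcM.eigenvalues_mem_spectrum_real i :)
  linarith [h μ hμ]

lemma IsHermitian.dotProduct_mulVec_lt (hM : M.IsHermitian) {c : ℝ}
    (h : ∀ μ ∈ spectrum ℝ M, μ < c) {x : m → ℝ} (hx : x ≠ 0) :
    x ⬝ᵥ M *ᵥ x < c * (x ⬝ᵥ x) := by
  have := (hM.posDef_algebraMap_sub h).dotProduct_mulVec_pos hx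
  rw [star_trivial, sub_mulVec, dotProduct_sub, Algebra.algebraMap_eq_smul_one, smul_mulVec,
    one_mulVec, dotProduct_smul, smul_eq_mul] at this
  linarith

lemma exists_mulVec_eq_smul_of_mem_spectrum {μ : ℝ} (hμ : μ ∈ spectrum ℝ M) :
    ∃ v : m → ℝ, v ≠ 0 ∧ M *ᵥ v = μ • v := by
  obtain ⟨v, hv⟩ := (Module.End.hasEigenvalue_iff_mem_spectrum.mpr
    (spectrum_toLin' M ▸ hμ)).exists_hasEigenvector
  exact ⟨v, hv.2, by simpa using hv.apply_eq_smul⟩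

lemma IsHermitian.forall_abs_lt_iff (hM : M.IsHermitian) {c : ℝ} :
    (∀ μ ∈ spectrum ℝ M, |μ| < c) ↔ ∀ x : m → ℝ, x ≠ 0 → |x ⬝ᵥ M *ᵥ x| < c * (x ⬝ᵥ x) := by
  constructor
  · intro h x hx
    have hneg : ∀ μ ∈ spectrum ℝ (-M), μ < c := by
      rw [← spectrum.neg_eq]
      exact fun μ hμ => (abs_lt.mp (abs_neg μ ▸ h (-μ) hμ)).2
    have hup := hM.dotProduct_mulVec_lt (fun μ hμ => (abs_lt.mp (h μ hμ)).2) hx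
    have hlow := hM.neg.dotProduct_mulVec_lt hneg hx
    rw [neg_mulVec, dotProduct_neg] at hlow
    exact abs_lt.mpr ⟨by linarith, hup⟩
  · intro h μ hμ
    obtain ⟨v, hv, hMv⟩ := exists_mulVec_eq_smul_of_mem_spectrum hμ
    have hvv : 0 < v ⬝ᵥ v := by simpa using PosDef.one.dotProduct_mulVec_pos hv
    have := h v hv
    rwa [hMv, dotProduct_smul, smul_eq_mul, abs_mul, abs_of_pos hvv,
      mul_lt_mul_iff_left₀ hvv] at this

end

lemma dotProduct_mulVec_add_sum_smul {m ι : Type*} [Fintype m] [Fintype ι]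
    (A₀ : Matrix m m ℝ) (A : ι → Matrix m m ℝ) (p : ι → ℝ) (x : m → ℝ) :
    x ⬝ᵥ (A₀ + ∑ k, p k • A k) *ᵥ x = x ⬝ᵥ A₀ *ᵥ x + ∑ k, p k * (x ⬝ᵥ A k *ᵥ x) := by
  simp [add_mulVec, sum_mulVec, dotProduct_sum, smul_mulVec]

end Matrix

lemma exists_vertex_sum_mul_le {ι : Type*} [Fintype ι] {lo hi p : ι → ℝ}
    (hp : ∀ k, lo k ≤ p k ∧ p k ≤ hi k) (d : ι → ℝ) :
    ∃ q : ι → ℝ, (∀ k, q k = lo k ∨ q k = hi k) ∧ ∑ k, p k * d k ≤ ∑ k, q k * d k := by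
  classical
  refine ⟨fun k => if 0 ≤ d k then hi k else lo k, fun k => by dsimp only; split_ifs <;> simp,
    Finset.sum_le_sum fun k _ => ?_⟩
  dsimp only
  split_ifs with hd
  · exact mul_le_mul_of_nonneg_right (hp k).2 hd
  · exact mul_le_mul_of_nonpos_right (hp k).1 (not_le.mp hd).le

lemma exists_vertex_le_sum_mul {ι : Type*} [Fintype ι] {lo hi p : ι → ℝ}
    (hp : ∀ k, lo k ≤ p k ∧ p k ≤ hi k) (d : ι → ℝ) :
    ∃ q : ι → ℝ, (∀ k, q k = lo k ∨ q k = hi k) ∧ ∑ k, q k * d k ≤ ∑ k, p k * d k := by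
  obtain ⟨q, hq, hle⟩ := exists_vertex_sum_mul_le hp (-d)
  exact ⟨q, hq, by simpa using hle⟩

/-- A symmetric parametric interval matrix `A(p) = A⁰ + ∑ pₖ·Aᵏ` is Schur stable (all
eigenvalues in `(−1, 1)`) for every `p` in the parameter box `∏ₖ [p̲ₖ, p̄ₖ]` if and only if
it is Schur stable at every vertex of the box. -/
theorem stmt_6 {n K : ℕ}
    (A0 : Matrix (Fin n) (Fin n) ℝ) (A : Fin K → Matrix (Fin n) (Fin n) ℝ)
    (hA0 : A0.IsSymm) (hA : ∀ k, (A k).IsSymm)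
    (plo phi : Fin K → ℝ) (hbox : ∀ k, plo k ≤ phi k) :
    (∀ p : Fin K → ℝ, (∀ k, plo k ≤ p k ∧ p k ≤ phi k) →
        ∀ μ ∈ spectrum ℝ (A0 + ∑ k, p k • A k), |μ| < 1) ↔
    (∀ p : Fin K → ℝ, (∀ k, p k = plo k ∨ p k = phi k) →
        ∀ μ ∈ spectrum ℝ (A0 + ∑ k, p k • A k), |μ| < 1) := by
  have hherm : ∀ q : Fin K → ℝ, (A0 + ∑ k, q k • A k).IsHermitian := fun q =>
    isHermitian_iff_isSymm.mpr <| hA0.add <| by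
      simp only [IsSymm, transpose_sum, transpose_smul, (hA _).eq]
  refine ⟨fun h p hp => h p fun k => by rcases hp k with hk | hk <;> simp [hk, hbox k], ?_⟩
  intro h p hp
  rw [(hherm p).forall_abs_lt_iff]
  intro x hx
  obtain ⟨qU, hqU, hU⟩ := exists_vertex_sum_mul_le hp fun k => x ⬝ᵥ A k *ᵥ x
  obtain ⟨qL, hqL, hL⟩ := exists_vertex_le_sum_mul hp fun k => x ⬝ᵥ A k *ᵥ x
  have hxU := (hherm qU).forall_abs_lt_iff.mp (h qU hqU) x hx
  have hxL := (hherm qL).forall_abs_lt_iff.mp (h qL hqL) x hx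
  simp only [dotProduct_mulVec_add_sum_smul, abs_lt] at hxU hxL ⊢
  constructor <;> linarith [hxU.1, hxU.2, hxL.1, hxL.2]
end
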